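/- arXiv:1704.02175 — 5 statements merged into one kernel-verified Lean document; each statement's English description precedes it below -/
import Mathlib

section
/- Let F be a family of subsets of {1,...,n} that contains no k pairwise crossing sets. Then there exists a family F' of subsets of {1,...,n}, none of which contains the element 1, such that F' contains no k pairwise weakly crossing sets and |F'| ≥ |F|/2. -/
def Crossing (n : ℕ) (A B : Finset ℕ) : Prop :=
  (A ∩ B).Nonempty ∧ (A \ B).Nonempty ∧ (B \ A).Nonempty ∧
    (Finset.Icc 1 n \ (A ∪ B)).Nonempty

def WeaklyCrossing (A B : Finset ℕ) : Prop :=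
  (A ∩ B).Nonempty ∧ (A \ B).Nonempty ∧ (B \ A).Nonempty

def KCrossFree (n k : ℕ) (F : Finset (Finset ℕ)) : Prop :=
  ¬ ∃ S ⊆ F, S.card = k ∧ (S : Set (Finset ℕ)).Pairwise (Crossing n)

def WeaklyKCrossFree (k : ℕ) (F : Finset (Finset ℕ)) : Prop :=
  ¬ ∃ S ⊆ F, S.card = k ∧ (S : Set (Finset ℕ)).Pairwise WeaklyCrossing

lemma one_mem_Icc_of_mem {n x : ℕ} {A : Finset ℕ} (hA : A ⊆ Finset.Icc 1 n)
    (hx : x ∈ A) : 1 ∈ Finset.Icc 1 n := by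
  have := hA hx
  simp only [Finset.mem_Icc] at this ⊢
  omega

theorem exists_weaklyCrossFree_half (n k : ℕ) (F : Finset (Finset ℕ))
    (hF : ∀ A ∈ F, A ⊆ Finset.Icc 1 n) (hcf : KCrossFree n k F) :
    ∃ F' : Finset (Finset ℕ), (∀ A ∈ F', A ⊆ Finset.Icc 1 n ∧ 1 ∉ A) ∧
      WeaklyKCrossFree k F' ∧ (F.card : ℝ) / 2 ≤ F'.card := by
  classical
  set I := Finset.Icc 1 n with hI
  set F1 := F.filter (fun A => 1 ∉ A) with hF1
  set F2 := F.filter (fun A => 1 ∈ A) with hF2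
  have hsplit : F2.card + F1.card = F.card := by
    rw [hF1, hF2]
    exact Finset.card_filter_add_card_filter_not (p := fun A => 1 ∈ A)
  by_cases hbig : F2.card ≤ F1.card
  · -- take F1
    refine ⟨F1, ?_, ?_, ?_⟩
    · intro A hA
      rw [hF1, Finset.mem_filter] at hA
      exact ⟨hF A hA.1, hA.2⟩
    · rintro ⟨S, hS, hcard, hpair⟩
      apply hcf
      refine ⟨S, hS.trans (Finset.filter_subset _ _), hcard, ?_⟩
      intro A hA B hB hne
      obtain ⟨h1, h2, h3⟩ := hpair hA hB hne
      refine ⟨h1, h2, h3, ?_⟩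
      obtain ⟨x, hx⟩ := h1
      rw [Finset.mem_inter] at hx
      have hAF : A ∈ F1 := hS hA
      have hBF : B ∈ F1 := hS hB
      rw [hF1, Finset.mem_filter] at hAF hBF
      refine ⟨1, Finset.mem_sdiff.2 ⟨one_mem_Icc_of_mem (hF A hAF.1) hx.1, ?_⟩⟩
      rw [Finset.mem_union]
      push_neg
      exact ⟨hAF.2, hBF.2⟩
    · have : (F.card : ℝ) ≤ 2 * F1.card := by
        have : F.card ≤ 2 * F1.card := by omega
        exact_mod_cast this
      linarith
  · -- take complements of F2
    refine ⟨F2.image (fun A => I \ A), ?_, ?_, ?_⟩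
    · intro B hB
      rw [Finset.mem_image] at hB
      obtain ⟨A, hA, rfl⟩ := hB
      rw [hF2, Finset.mem_filter] at hA
      exact ⟨Finset.sdiff_subset, fun h => (Finset.mem_sdiff.1 h).2 hA.2⟩
    · rintro ⟨S, hS, hcard, hpair⟩
      apply hcf
      -- every B in S is of form I \ A with A ∈ F2; pull back via B ↦ I \ B
      have hform : ∀ B ∈ S, I \ B ∈ F2 ∧ B ⊆ I ∧ I \ (I \ B) = B := by
        intro B hB
        obtain ⟨A, hA, rfl⟩ := Finset.mem_image.1 (hS hB)
        have hAI : A ⊆ I := hF A ((Finset.mem_filter.1 hA).1)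
        exact ⟨by rwa [Finset.sdiff_sdiff_eq_self hAI], Finset.sdiff_subset,
          by rw [Finset.sdiff_sdiff_eq_self hAI]⟩
      refine ⟨S.image (fun B => I \ B), ?_, ?_, ?_⟩
      · intro A hA
        obtain ⟨B, hB, rfl⟩ := Finset.mem_image.1 hA
        exact (Finset.mem_filter.1 (hform B hB).1).1
      · rw [Finset.card_image_of_injOn, hcard]
        intro B hB B' hB' h
        have h' : I \ B = I \ B' := h
        rw [← (hform B hB).2.2, ← (hform B' hB').2.2, h']
      · intro A hA B hB hne
        simp only [Finset.coe_image, Set.mem_image, Finset.mem_coe] at hA hB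
        obtain ⟨X, hX, rfl⟩ := hA
        obtain ⟨Y, hY, rfl⟩ := hB
        have hXY : X ≠ Y := by
          rintro rfl; exact hne rfl
        obtain ⟨h1, h2, h3⟩ := hpair hX hY hXY
        obtain ⟨hXF, hXI, hXX⟩ := hform X hX
        obtain ⟨hYF, hYI, hYY⟩ := hform Y hY
        have h1X : 1 ∈ I \ X := by
          have := Finset.mem_filter.1 hXF
          have h1A : 1 ∈ I \ X := by
            have h1I : 1 ∈ I := by
              obtain ⟨x, hx⟩ := h1
              rw [Finset.mem_inter] at hx
              exact one_mem_Icc_of_mem hXI hx.1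
            have : 1 ∉ X := by
              obtain ⟨A, hA, rfl⟩ := Finset.mem_image.1 (hS hX)
              have := (Finset.mem_filter.1 hA).2
              exact fun h => (Finset.mem_sdiff.1 h).2 this
            exact Finset.mem_sdiff.2 ⟨h1I, this⟩
          exact h1A
        have h1Y : 1 ∈ I \ Y := by
          have h1I : 1 ∈ I := (Finset.mem_sdiff.1 h1X).1
          have : 1 ∉ Y := by
            obtain ⟨A, hA, rfl⟩ := Finset.mem_image.1 (hS hY)
            have := (Finset.mem_filter.1 hA).2
            exact fun h => (Finset.mem_sdiff.1 h).2 this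
          exact Finset.mem_sdiff.2 ⟨h1I, this⟩
        refine ⟨⟨1, Finset.mem_inter.2 ⟨h1X, h1Y⟩⟩, ?_, ?_, ?_⟩
        · -- (I \ X) \ (I \ Y) nonempty : take x ∈ Y \ X
          obtain ⟨x, hx⟩ := h3
          rw [Finset.mem_sdiff] at hx
          refine ⟨x, ?_⟩
          simp only [Finset.mem_sdiff, not_and, not_not]
          exact ⟨⟨hYI hx.1, hx.2⟩, fun _ => hx.1⟩
        · obtain ⟨x, hx⟩ := h2
          rw [Finset.mem_sdiff] at hx
          refine ⟨x, ?_⟩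
          simp only [Finset.mem_sdiff, not_and, not_not]
          exact ⟨⟨hXI hx.1, hx.2⟩, fun _ => hx.1⟩
        · -- I \ ((I\X) ∪ (I\Y)) nonempty : take x ∈ X ∩ Y
          obtain ⟨x, hx⟩ := h1
          rw [Finset.mem_inter] at hx
          refine ⟨x, ?_⟩
          simp only [Finset.mem_sdiff, Finset.mem_union, not_or, not_and, not_not]
          exact ⟨hXI hx.1, fun _ => hx.1, fun _ => hx.2⟩
    · rw [Finset.card_image_of_injOn]
      · have : (F.card : ℝ) ≤ 2 * F2.card := by
          have : F.card ≤ 2 * F2.card := by omega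
          exact_mod_cast this
        linarith
      · intro A hA A' hA' h
        rw [Finset.mem_coe, hF2, Finset.mem_filter] at hA hA'
        have hAI := hF A hA.1
        have hAI' := hF A' hA'.1
        have h2 : I \ A = I \ A' := h
        rw [← Finset.sdiff_sdiff_eq_self hAI, ← Finset.sdiff_sdiff_eq_self hAI', h2]
end

section
/- Let F be a weakly k-cross-free family of subsets of [n], and let A ⊆ F be an antichain (with respect to inclusion) all of whose members have size greater than 2^i. Then |A| ≤ (k-1)·n / 2^i. -/
theorem antichain_card_le (n k i : ℕ) (F 𝒜 : Finset (Finset ℕ))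
    (hF : ∀ A ∈ F, A ⊆ Finset.Icc 1 n) (hcf : WeaklyKCrossFree k F)
    (h𝒜 : 𝒜 ⊆ F)
    (hanti : ∀ A ∈ 𝒜, ∀ B ∈ 𝒜, A ≠ B → ¬ A ⊆ B)
    (hsize : ∀ A ∈ 𝒜, 2 ^ i < A.card) :
    (𝒜.card : ℝ) ≤ (k - 1) * n / 2 ^ i := by
  rcases Nat.eq_zero_or_pos k with hk | hk
  · exact absurd ⟨∅, by simp [hk]⟩ hcf
  have key : ∀ x : ℕ, (𝒜.filter (fun A => x ∈ A)).card ≤ k - 1 := by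
    intro x
    by_contra h
    push_neg at h
    have hkc : k ≤ (𝒜.filter (fun A => x ∈ A)).card := by omega
    obtain ⟨S, hS, hScard⟩ := Finset.exists_subset_card_eq hkc
    apply hcf
    refine ⟨S, fun A hA => h𝒜 (Finset.mem_filter.mp (hS hA)).1, hScard, ?_⟩
    intro A hA B hB hne
    have hA' := Finset.mem_filter.mp (hS hA)
    have hB' := Finset.mem_filter.mp (hS hB)
    exact ⟨⟨x, Finset.mem_inter.mpr ⟨hA'.2, hB'.2⟩⟩,
      Finset.sdiff_nonempty.mpr (hanti _ hA'.1 _ hB'.1 hne),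
      Finset.sdiff_nonempty.mpr (hanti _ hB'.1 _ hA'.1 (Ne.symm hne))⟩
  have hswap : ∑ A ∈ 𝒜, A.card
      = ∑ x ∈ Finset.Icc 1 n, (𝒜.filter (fun A => x ∈ A)).card := by
    have h1 : ∀ A ∈ 𝒜, A.card = ∑ x ∈ Finset.Icc 1 n, if x ∈ A then 1 else 0 := by
      intro A hA
      rw [← Finset.card_filter, Finset.filter_mem_eq_inter,
        Finset.inter_eq_right.mpr (hF A (h𝒜 hA))]
    rw [Finset.sum_congr rfl h1, Finset.sum_comm]
    exact Finset.sum_congr rfl fun x _ => (Finset.card_filter _ _).symm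
  have hsum : 𝒜.card * 2 ^ i ≤ (k - 1) * n := by
    calc 𝒜.card * 2 ^ i = ∑ _A ∈ 𝒜, 2 ^ i := by rw [Finset.sum_const, smul_eq_mul]
    _ ≤ ∑ A ∈ 𝒜, A.card := Finset.sum_le_sum fun A hA => le_of_lt (hsize A hA)
    _ = ∑ x ∈ Finset.Icc 1 n, (𝒜.filter (fun A => x ∈ A)).card := hswap
    _ ≤ ∑ _x ∈ Finset.Icc 1 n, (k - 1) := Finset.sum_le_sum fun x _ => key x
    _ = (k - 1) * n := by rw [Finset.sum_const, smul_eq_mul, Nat.card_Icc, Nat.add_sub_cancel, Nat.mul_comm]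
  have h2 : (0 : ℝ) < 2 ^ i := by positivity
  rw [le_div_iff₀ h2]
  have : ((𝒜.card * 2 ^ i : ℕ) : ℝ) ≤ (((k - 1) * n : ℕ) : ℝ) := Nat.cast_le.mpr hsum
  rw [Nat.cast_mul, Nat.cast_mul, Nat.cast_pow, Nat.cast_sub hk] at this
  simpa using this
end

section
/- Let F be a weakly k-cross-free family of subsets of [n] whose members all have size greater than 2^i and at most 2^{i+1}. Then there exists a collection Γ of pairwise disjoint chains in F such that the set of maximal elements {max C : C ∈ Γ} forms an antichain and the total number of sets covered by the chains satisfies Σ_{C∈Γ} |C| ≥ |F|/(k-1). -/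
open Finset in
lemma mirsky_aux (k : ℕ) (G : Finset (Finset ℕ))
    (hanti : ∀ S ⊆ G, (S : Set (Finset ℕ)).Pairwise (fun A B => ¬ A ⊆ B ∧ ¬ B ⊆ A) → S.card ≤ k) :
    ∃ C ⊆ G, IsChain (· ⊆ ·) (C : Set (Finset ℕ)) ∧ G.card ≤ k * C.card := by
  classical
  -- set of chains in G
  set Ch : Finset (Finset (Finset ℕ)) :=
    G.powerset.filter (fun C => IsChain (· ⊆ ·) (C : Set (Finset ℕ))) with hCh
  have hChne : Ch.Nonempty := ⟨∅, by simp [hCh]⟩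
  obtain ⟨C₀, hC₀Ch, hC₀sup⟩ := Finset.exists_mem_eq_sup Ch hChne Finset.card
  have hC₀G : C₀ ⊆ G := by
    have := (Finset.mem_filter.1 hC₀Ch).1; exact Finset.mem_powerset.1 this
  have hC₀chain : IsChain (· ⊆ ·) (C₀ : Set (Finset ℕ)) := (Finset.mem_filter.1 hC₀Ch).2
  refine ⟨C₀, hC₀G, hC₀chain, ?_⟩
  -- height function
  set ht : Finset ℕ → ℕ :=
    fun A => (Ch.filter (fun C => A ∈ C ∧ ∀ B ∈ C, B ⊆ A)).sup Finset.card with hht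
  have htub : ∀ A, ht A ≤ C₀.card := by
    intro A
    apply Finset.sup_le
    intro C hC
    rw [← hC₀sup]
    exact Finset.le_sup (Finset.mem_filter.1 hC).1
  have htlb : ∀ A ∈ G, 1 ≤ ht A := by
    intro A hA
    have : ({A} : Finset (Finset ℕ)) ∈ Ch.filter (fun C => A ∈ C ∧ ∀ B ∈ C, B ⊆ A) := by
      simp only [hCh, Finset.mem_filter, Finset.mem_powerset, Finset.singleton_subset_iff,
        Finset.mem_singleton, Finset.coe_singleton]
      exact ⟨⟨hA, Set.subsingleton_singleton.isChain⟩, trivial, fun B hB => hB ▸ Finset.Subset.refl A⟩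
    calc 1 = ({A} : Finset (Finset ℕ)).card := by simp
    _ ≤ _ := Finset.le_sup this
  have htmono : ∀ A ∈ G, ∀ B ∈ G, A ⊂ B → ht A < ht B := by
    intro A hA B hB hAB
    have hne : (Ch.filter (fun C => A ∈ C ∧ ∀ B ∈ C, B ⊆ A)).Nonempty := by
      refine ⟨{A}, ?_⟩
      simp only [hCh, Finset.mem_filter, Finset.mem_powerset, Finset.singleton_subset_iff,
        Finset.mem_singleton, Finset.coe_singleton]
      exact ⟨⟨hA, Set.subsingleton_singleton.isChain⟩, trivial, fun B hB => hB ▸ Finset.Subset.refl A⟩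
    obtain ⟨C, hC, hCsup⟩ := Finset.exists_mem_eq_sup _ hne Finset.card
    obtain ⟨hCCh, hAC, hCsub⟩ := Finset.mem_filter.1 hC
    have hCG : C ⊆ G := Finset.mem_powerset.1 (Finset.mem_filter.1 hCCh).1
    have hCchain : IsChain (· ⊆ ·) (C : Set (Finset ℕ)) := (Finset.mem_filter.1 hCCh).2
    have hBC : B ∉ C := fun h => hAB.not_subset ((hCsub B h).trans (Finset.Subset.refl A)) |>.elim
    have hins : insert B C ∈ Ch.filter (fun C => B ∈ C ∧ ∀ X ∈ C, X ⊆ B) := by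
      refine Finset.mem_filter.2 ⟨Finset.mem_filter.2 ⟨?_, ?_⟩, ?_, ?_⟩
      · exact Finset.mem_powerset.2 (Finset.insert_subset hB hCG)
      · rw [Finset.coe_insert]
        exact hCchain.insert (fun X hX _ => Or.inr ((hCsub X hX).trans hAB.subset))
      · exact Finset.mem_insert_self _ _
      · intro X hX
        rcases Finset.mem_insert.1 hX with rfl | hX
        · exact Finset.Subset.refl _
        · exact (hCsub X hX).trans hAB.subset
    have : C.card + 1 ≤ ht B := by
      have := Finset.le_sup (f := Finset.card) hins
      rwa [Finset.card_insert_of_notMem hBC] at this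
    have hAeq : ht A = C.card := hCsup
    omega
  -- levels are antichains
  have hlevel : ∀ j, (G.filter (fun A => ht A = j)).card ≤ k := by
    intro j
    apply hanti _ (Finset.filter_subset _ _)
    intro A hA B hB hABne
    simp only [Finset.coe_filter, Set.mem_setOf_eq] at hA hB
    constructor
    · intro h
      have : A ⊂ B := Finset.ssubset_iff_subset_ne.2 ⟨h, hABne⟩
      have := htmono A hA.1 B hB.1 this
      omega
    · intro h
      have : B ⊂ A := Finset.ssubset_iff_subset_ne.2 ⟨h, Ne.symm hABne⟩
      have := htmono B hB.1 A hA.1 this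
      omega
  have hcard : G.card = ∑ j ∈ Finset.Icc 1 C₀.card, (G.filter (fun A => ht A = j)).card :=
    Finset.card_eq_sum_card_fiberwise (fun A hA => Finset.mem_Icc.2 ⟨htlb A hA, htub A⟩)
  calc G.card = _ := hcard
  _ ≤ ∑ _j ∈ Finset.Icc 1 C₀.card, k := Finset.sum_le_sum (fun j _ => hlevel j)
  _ = C₀.card * k := by simp [Nat.Icc_eq_range', mul_comm]
  _ = k * C₀.card := mul_comm _ _

theorem exists_chain_cover (n k i : ℕ) (F : Finset (Finset ℕ))
    (hF : ∀ A ∈ F, A ⊆ Finset.Icc 1 n)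
    (hsize : ∀ A ∈ F, 2 ^ i < A.card ∧ A.card ≤ 2 ^ (i + 1))
    (hcf : WeaklyKCrossFree k F) :
    ∃ (Γ : Finset (Finset (Finset ℕ))) (m : Finset (Finset ℕ) → Finset ℕ),
      (∀ C ∈ Γ, C.Nonempty ∧ C ⊆ F ∧ IsChain (· ⊆ ·) (C : Set (Finset ℕ))) ∧
      (∀ C ∈ Γ, ∀ D ∈ Γ, C ≠ D → Disjoint C D) ∧
      (∀ C ∈ Γ, m C ∈ C ∧ ∀ A ∈ C, A ⊆ m C) ∧
      (∀ C ∈ Γ, ∀ D ∈ Γ, C ≠ D → ¬ m C ⊆ m D) ∧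
      (F.card : ℝ) / (k - 1) ≤ ∑ C ∈ Γ, (C.card : ℝ) := by
  classical
  by_cases hFe : F = ∅
  · refine ⟨∅, fun _ => ∅, by simp, by simp, by simp, by simp, ?_⟩
    simp [hFe]
  have hFne : F.Nonempty := Finset.nonempty_iff_ne_empty.2 hFe
  have hk2 : 2 ≤ k := by
    by_contra hlt
    interval_cases k
    · exact hcf ⟨∅, Finset.empty_subset _, by simp, by simp⟩
    · obtain ⟨A, hA⟩ := hFne
      refine hcf ⟨{A}, Finset.singleton_subset_iff.2 hA, by simp, ?_⟩
      simp [Set.pairwise_singleton]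
  -- maximal-element assignment
  have hf : ∀ A ∈ F, ∃ M, M ∈ F ∧ A ⊆ M ∧ ∀ B ∈ F, M ⊆ B → B = M := by
    intro A hA
    have hne : (F.filter (fun X => A ⊆ X)).Nonempty := ⟨A, by simp [hA]⟩
    obtain ⟨M, hM, hMmax⟩ := Finset.exists_max_image _ Finset.card hne
    obtain ⟨hMF, hAM⟩ := Finset.mem_filter.1 hM
    refine ⟨M, hMF, hAM, fun B hB hMB => ?_⟩
    have hBmem : B ∈ F.filter (fun X => A ⊆ X) := Finset.mem_filter.2 ⟨hB, hAM.trans hMB⟩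
    exact (Finset.eq_of_subset_of_card_le hMB (hMmax B hBmem)).symm
  set f : Finset ℕ → Finset ℕ := fun A => if h : A ∈ F then (hf A h).choose else ∅ with hfdef
  have hfF : ∀ A ∈ F, f A ∈ F := by
    intro A hA; simp only [hfdef, dif_pos hA]; exact (hf A hA).choose_spec.1
  have hfsub : ∀ A ∈ F, A ⊆ f A := by
    intro A hA; simp only [hfdef, dif_pos hA]; exact (hf A hA).choose_spec.2.1
  have hfmax : ∀ A ∈ F, ∀ B ∈ F, f A ⊆ B → B = f A := by
    intro A hA; simp only [hfdef, dif_pos hA]; exact (hf A hA).choose_spec.2.2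
  set Mx : Finset (Finset ℕ) := F.filter (fun M => ∀ B ∈ F, M ⊆ B → B = M) with hMxdef
  have hfMx : ∀ A ∈ F, f A ∈ Mx :=
    fun A hA => Finset.mem_filter.2 ⟨hfF A hA, hfmax A hA⟩
  have hfix : ∀ M ∈ Mx, f M = M := by
    intro M hM
    obtain ⟨hMF, hMmax⟩ := Finset.mem_filter.1 hM
    exact hMmax (f M) (hfF M hMF) (hfsub M hMF)
  set fib : Finset ℕ → Finset (Finset ℕ) := fun M => F.filter (fun A => f A = M) with hfibdef
  have hfibF : ∀ M, fib M ⊆ F := fun M => Finset.filter_subset _ _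
  have hfibsub : ∀ M, ∀ A ∈ fib M, A ⊆ M := by
    intro M A hA
    obtain ⟨hAF, hfA⟩ := Finset.mem_filter.1 hA
    exact hfA ▸ hfsub A hAF
  have hMfib : ∀ M ∈ Mx, M ∈ fib M := by
    intro M hM
    exact Finset.mem_filter.2 ⟨(Finset.mem_filter.1 hM).1, hfix M hM⟩
  -- incomparable sets in the same fiber weakly cross
  have hcross : ∀ M ∈ Mx, ∀ A ∈ fib M, ∀ B ∈ fib M, ¬ A ⊆ B → ¬ B ⊆ A →
      (A ∩ B).Nonempty ∧ (A \ B).Nonempty ∧ (B \ A).Nonempty := by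
    intro M hM A hA B hB hAB hBA
    have hAF := hfibF M hA
    have hBF := hfibF M hB
    have hMF := (Finset.mem_filter.1 hM).1
    refine ⟨?_, ?_, ?_⟩
    · rw [← Finset.card_pos]
      have h1 : (A ∪ B) ⊆ M := Finset.union_subset (hfibsub M A hA) (hfibsub M B hB)
      have h2 := Finset.card_le_card h1
      have h4 := (hsize M hMF).2
      have h5 := (hsize A hAF).1
      have h6 := (hsize B hBF).1
      have h7 := Finset.card_inter_add_card_union A B
      have hpow : 2 ^ (i + 1) = 2 ^ i + 2 ^ i := by ring
      omega
    · obtain ⟨x, hx, hxn⟩ := Finset.not_subset.1 hAB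
      exact ⟨x, Finset.mem_sdiff.2 ⟨hx, hxn⟩⟩
    · obtain ⟨x, hx, hxn⟩ := Finset.not_subset.1 hBA
      exact ⟨x, Finset.mem_sdiff.2 ⟨hx, hxn⟩⟩
  -- antichains in fibers are small
  have hanti : ∀ M ∈ Mx, ∀ S ⊆ fib M,
      (S : Set (Finset ℕ)).Pairwise (fun A B => ¬ A ⊆ B ∧ ¬ B ⊆ A) → S.card ≤ k - 1 := by
    intro M hM S hS hP
    by_contra hbig
    have hk : k ≤ S.card := by omega
    obtain ⟨T, hTS, hTcard⟩ := Finset.exists_subset_card_eq hk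
    refine hcf ⟨T, (hTS.trans hS).trans (hfibF M), hTcard, ?_⟩
    intro A hA B hB hne
    have hA' : A ∈ S := hTS hA
    have hB' : B ∈ S := hTS hB
    obtain ⟨h1, h2⟩ := hP hA' hB' hne
    exact hcross M hM A (hS hA') B (hS hB') h1 h2
  -- build chain for each maximal element
  have key : ∀ M ∈ Mx, ∃ C, C ⊆ fib M ∧ M ∈ C ∧ IsChain (· ⊆ ·) (C : Set (Finset ℕ)) ∧
      (∀ A ∈ C, A ⊆ M) ∧ (fib M).card ≤ (k - 1) * C.card := by
    intro M hM
    obtain ⟨C₀, hC₀sub, hC₀chain, hC₀card⟩ := mirsky_aux (k - 1) (fib M) (hanti M hM)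
    refine ⟨insert M C₀, Finset.insert_subset (hMfib M hM) hC₀sub, Finset.mem_insert_self _ _,
      ?_, ?_, ?_⟩
    · rw [Finset.coe_insert]
      exact hC₀chain.insert (fun X hX _ => Or.inr (hfibsub M X (hC₀sub hX)))
    · intro A hA
      rcases Finset.mem_insert.1 hA with rfl | hA
      · exact Finset.Subset.refl _
      · exact hfibsub M A (hC₀sub hA)
    · calc (fib M).card ≤ (k - 1) * C₀.card := hC₀card
      _ ≤ (k - 1) * (insert M C₀).card :=
        Nat.mul_le_mul_left _ (Finset.card_le_card (Finset.subset_insert _ _))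
  set g : Finset ℕ → Finset (Finset ℕ) :=
    fun M => if h : M ∈ Mx then (key M h).choose else ∅ with hgdef
  have hg : ∀ M ∈ Mx, g M ⊆ fib M ∧ M ∈ g M ∧ IsChain (· ⊆ ·) ((g M : Set (Finset ℕ))) ∧
      (∀ A ∈ g M, A ⊆ M) ∧ (fib M).card ≤ (k - 1) * (g M).card := by
    intro M hM; simp only [hgdef, dif_pos hM]; exact (key M hM).choose_spec
  have hginj : ∀ M ∈ Mx, ∀ M' ∈ Mx, g M = g M' → M = M' := by
    intro M hM M' hM' heq
    have h1 : M ∈ fib M' := (hg M' hM').1 (heq ▸ (hg M hM).2.1)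
    have := (Finset.mem_filter.1 h1).2
    rw [hfix M hM] at this
    exact this
  refine ⟨Mx.image g, fun C => C.sup id, ?_, ?_, ?_, ?_, ?_⟩
  · intro C hC
    obtain ⟨M, hM, rfl⟩ := Finset.mem_image.1 hC
    exact ⟨⟨M, (hg M hM).2.1⟩, ((hg M hM).1).trans (hfibF M), (hg M hM).2.2.1⟩
  · intro C hC D hD hne
    obtain ⟨M, hM, rfl⟩ := Finset.mem_image.1 hC
    obtain ⟨M', hM', rfl⟩ := Finset.mem_image.1 hD
    have hMne : M ≠ M' := fun h => hne (h ▸ rfl)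
    rw [Finset.disjoint_left]
    intro A hA hA'
    have h1 := (hg M hM).1 hA
    have h2 := (hg M' hM').1 hA'
    exact hMne (((Finset.mem_filter.1 h1).2).symm.trans ((Finset.mem_filter.1 h2).2))
  · intro C hC
    obtain ⟨M, hM, rfl⟩ := Finset.mem_image.1 hC
    have hsup : (g M).sup id = M := by
      apply le_antisymm
      · exact Finset.sup_le (fun A hA => (hg M hM).2.2.2.1 A hA)
      · exact Finset.le_sup (f := id) (hg M hM).2.1
    simp only [hsup]
    exact ⟨(hg M hM).2.1, (hg M hM).2.2.2.1⟩
  · intro C hC D hD hne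
    obtain ⟨M, hM, rfl⟩ := Finset.mem_image.1 hC
    obtain ⟨M', hM', rfl⟩ := Finset.mem_image.1 hD
    have hMne : M ≠ M' := fun h => hne (h ▸ rfl)
    have hsup : (g M).sup id = M := le_antisymm
      (Finset.sup_le (fun A hA => (hg M hM).2.2.2.1 A hA)) (Finset.le_sup (f := id) (hg M hM).2.1)
    have hsup' : (g M').sup id = M' := le_antisymm
      (Finset.sup_le (fun A hA => (hg M' hM').2.2.2.1 A hA))
      (Finset.le_sup (f := id) (hg M' hM').2.1)
    simp only [hsup, hsup']
    intro hMM'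
    exact hMne (((Finset.mem_filter.1 hM).2 M' (Finset.mem_filter.1 hM').1 hMM').symm)
  · -- counting
    have hcount : F.card = ∑ M ∈ Mx, (fib M).card :=
      Finset.card_eq_sum_card_fiberwise hfMx
    have hsum : F.card ≤ (k - 1) * ∑ M ∈ Mx, (g M).card := by
      rw [hcount, Finset.mul_sum]
      exact Finset.sum_le_sum (fun M hM => (hg M hM).2.2.2.2)
    have himg : ∑ C ∈ Mx.image g, (C.card : ℝ) = ∑ M ∈ Mx, ((g M).card : ℝ) :=
      Finset.sum_image (fun M hM M' hM' h => hginj M hM M' hM' h)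
    rw [himg]
    have hkpos : (0:ℝ) < (k:ℝ) - 1 := by
      have : (2:ℝ) ≤ (k:ℝ) := by exact_mod_cast hk2
      linarith
    rw [div_le_iff₀ hkpos]
    have hcast : ((F.card : ℕ) : ℝ) ≤ ((k-1) * ∑ M ∈ Mx, (g M).card : ℕ) := by
      exact_mod_cast hsum
    push_cast at hcast
    rw [Nat.cast_sub (by omega)] at hcast
    push_cast at hcast
    calc (F.card : ℝ) ≤ ((k:ℝ) - 1) * ∑ M ∈ Mx, ((g M).card : ℝ) := hcast
    _ = (∑ M ∈ Mx, ((g M).card : ℝ)) * ((k:ℝ) - 1) := mul_comm _ _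
end

section
/- Let F be a family of subsets of [n] containing no k pairwise crossing sets. Then |F| ≤ 2 + 2(k-1)·n·H(n), where H(n) = Σ_{s=1}^{n} 1/s is the n-th harmonic number; in particular |F| = O_k(n log n). -/
lemma crossing_of_small {n s : ℕ} (hs : 2*s ≤ n) {A B : Finset ℕ} {x : ℕ}
    (hA : A ⊆ Finset.Icc 1 n) (hB : B ⊆ Finset.Icc 1 n)
    (hAs : A.card = s) (hBs : B.card = s) (hxA : x ∈ A) (hxB : x ∈ B)
    (hne : A ≠ B) : Crossing n A B := by
  refine ⟨⟨x, Finset.mem_inter.2 ⟨hxA, hxB⟩⟩, ?_, ?_, ?_⟩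
  · rw [Finset.sdiff_nonempty]
    intro h
    exact hne (Finset.eq_of_subset_of_card_le h (by omega))
  · rw [Finset.sdiff_nonempty]
    intro h
    exact hne ((Finset.eq_of_subset_of_card_le h (by omega)).symm)
  · rw [Finset.sdiff_nonempty]
    intro h
    have hU : A ∪ B ⊆ Finset.Icc 1 n := Finset.union_subset hA hB
    have h1 : (A ∪ B).card = n := le_antisymm
      (by simpa [Nat.card_Icc] using Finset.card_le_card hU)
      (by simpa [Nat.card_Icc] using Finset.card_le_card h)
    have h2 : (A ∪ B).card + (A ∩ B).card = A.card + B.card :=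
      Finset.card_union_add_card_inter A B
    have h3 : 1 ≤ (A ∩ B).card :=
      Finset.card_pos.2 ⟨x, Finset.mem_inter.2 ⟨hxA, hxB⟩⟩
    omega

lemma crossing_of_large {n s : ℕ} (hs : n ≤ 2*s) {A B : Finset ℕ} {x : ℕ}
    (hA : A ⊆ Finset.Icc 1 n) (hB : B ⊆ Finset.Icc 1 n)
    (hAs : A.card = s) (hBs : B.card = s) (hx : x ∈ Finset.Icc 1 n)
    (hxA : x ∉ A) (hxB : x ∉ B) (hne : A ≠ B) : Crossing n A B := by
  have hU : A ∪ B ⊆ (Finset.Icc 1 n).erase x := by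
    intro y hy
    refine Finset.mem_erase.2 ⟨?_, (Finset.union_subset hA hB) hy⟩
    rintro rfl
    rcases Finset.mem_union.1 hy with h | h
    exacts [hxA h, hxB h]
  have h1 : (A ∪ B).card ≤ n - 1 := by
    have := Finset.card_le_card hU
    rwa [Finset.card_erase_of_mem hx, Nat.card_Icc] at this
  have h2 : (A ∪ B).card + (A ∩ B).card = A.card + B.card :=
    Finset.card_union_add_card_inter A B
  have hn : 1 ≤ n := (Finset.mem_Icc.1 hx).2.trans' (Finset.mem_Icc.1 hx).1
  refine ⟨Finset.card_pos.1 (by omega), ?_, ?_, ⟨x, Finset.mem_sdiff.2 ⟨hx, by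
    simp [hxA, hxB]⟩⟩⟩
  · rw [Finset.sdiff_nonempty]
    intro h
    exact hne (Finset.eq_of_subset_of_card_le h (by omega))
  · rw [Finset.sdiff_nonempty]
    intro h
    exact hne ((Finset.eq_of_subset_of_card_le h (by omega)).symm)

lemma card_lt_of_pairwise {n k : ℕ} {F S : Finset (Finset ℕ)} (hcf : KCrossFree n k F)
    (hS : S ⊆ F) (hp : (S : Set (Finset ℕ)).Pairwise (Crossing n)) : S.card < k := by
  by_contra h
  push_neg at h
  obtain ⟨T, hTS, hTc⟩ := Finset.exists_subset_card_eq h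
  exact hcf ⟨T, hTS.trans hS, hTc, hp.mono (Finset.coe_subset.2 hTS)⟩
lemma sum_card_eq {n : ℕ} (G : Finset (Finset ℕ)) (hG : ∀ A ∈ G, A ⊆ Finset.Icc 1 n) :
    ∑ A ∈ G, A.card = ∑ x ∈ Finset.Icc 1 n, (G.filter (fun A => x ∈ A)).card := by
  simp only [Finset.card_filter]
  rw [Finset.sum_comm]
  refine Finset.sum_congr rfl fun A hA => ?_
  rw [← Finset.card_filter]
  rw [Finset.filter_mem_eq_inter, Finset.inter_eq_right.2 (hG A hA)]

lemma sum_ncard_eq {n : ℕ} (G : Finset (Finset ℕ)) (hG : ∀ A ∈ G, A ⊆ Finset.Icc 1 n) :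
    ∑ A ∈ G, (n - A.card) = ∑ x ∈ Finset.Icc 1 n, (G.filter (fun A => x ∉ A)).card := by
  simp only [Finset.card_filter]
  rw [Finset.sum_comm]
  refine Finset.sum_congr rfl fun A hA => ?_
  rw [← Finset.card_filter]
  have : Finset.filter (fun x => x ∉ A) (Finset.Icc 1 n) = Finset.Icc 1 n \ A := by
    ext y; simp [Finset.mem_sdiff]
  rw [this, Finset.card_sdiff_of_subset (hG A hA), Nat.card_Icc]
  simp

theorem lomonosov_bound (n k : ℕ) (F : Finset (Finset ℕ))
    (hF : ∀ A ∈ F, A ⊆ Finset.Icc 1 n) (hcf : KCrossFree n k F) :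
    (F.card : ℝ) ≤ 2 + 2 * (k - 1) * n * ∑ s ∈ Finset.Icc 1 n, (1 : ℝ) / s := by
  rcases Nat.eq_zero_or_pos k with rfl | hk
  · exact absurd (card_lt_of_pairwise hcf (Finset.empty_subset F) (by simp)) (by simp)
  set H : ℝ := ∑ s ∈ Finset.Icc 1 n, (1 : ℝ) / s with hH
  have hH0 : 0 ≤ H := Finset.sum_nonneg fun s _ => by positivity
  set F' : Finset (Finset ℕ) := F.filter (fun A => A ≠ ∅ ∧ A ≠ Finset.Icc 1 n) with hF'
  have hsplit : F.card ≤ F'.card + 2 := by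
    have h1 : F = F' ∪ F.filter (fun A => ¬(A ≠ ∅ ∧ A ≠ Finset.Icc 1 n)) :=
      (Finset.filter_union_filter_not_eq _ F).symm
    have h2 : F.filter (fun A => ¬(A ≠ ∅ ∧ A ≠ Finset.Icc 1 n)) ⊆ {∅, Finset.Icc 1 n} := by
      intro A hA
      simp only [Finset.mem_filter, not_and, not_not] at hA
      simp only [Finset.mem_insert, Finset.mem_singleton]
      by_cases h : A = ∅
      · exact Or.inl h
      · exact Or.inr (hA.2 h)
    calc F.card ≤ F'.card + (F.filter (fun A => ¬(A ≠ ∅ ∧ A ≠ Finset.Icc 1 n))).card := by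
          conv_lhs => rw [h1]
          exact Finset.card_union_le _ _
      _ ≤ F'.card + 2 := by
          have := Finset.card_le_card h2
          have h3 : ({∅, Finset.Icc 1 n} : Finset (Finset ℕ)).card ≤ 2 :=
            Finset.card_insert_le _ _ |>.trans (by simp)
          omega
  have hmem : ∀ A ∈ F', A.card ∈ Finset.Icc 1 (n-1) := by
    intro A hA
    rw [hF', Finset.mem_filter] at hA
    obtain ⟨hAF, hA1, hA2⟩ := hA
    have hsub := hF A hAF
    have hle : A.card ≤ n := by simpa [Nat.card_Icc] using Finset.card_le_card hsub
    have hpos : 1 ≤ A.card := Finset.card_pos.2 (Finset.nonempty_iff_ne_empty.2 hA1)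
    have hne : A.card ≠ n := by
      intro h
      exact hA2 (Finset.eq_of_subset_of_card_le hsub (by simp [Nat.card_Icc, h]))
    rw [Finset.mem_Icc]; omega
  have hcard : F'.card = ∑ s ∈ Finset.Icc 1 (n-1), ((F'.filter (fun A => A.card = s)).card) :=
    Finset.card_eq_sum_card_fiberwise hmem
  -- per-size bounds
  set G : ℕ → Finset (Finset ℕ) := fun s => F'.filter (fun A => A.card = s) with hG
  have hGsub : ∀ s, ∀ A ∈ G s, A ⊆ Finset.Icc 1 n := by
    intro s A hA
    rw [hG] at hA
    simp only [Finset.mem_filter, hF'] at hA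
    exact hF A hA.1.1
  have hfiber_small : ∀ s, 2*s ≤ n → ∀ x ∈ Finset.Icc 1 n,
      ((G s).filter (fun A => x ∈ A)).card ≤ k - 1 := by
    intro s hs x hx
    have hp : (((G s).filter (fun A => x ∈ A) : Finset (Finset ℕ)) : Set (Finset ℕ)).Pairwise (Crossing n) := by
      intro A hA B hB hne
      simp only [Finset.coe_filter, Set.mem_setOf_eq, hG, Finset.mem_filter] at hA hB
      exact crossing_of_small hs (hGsub s A (by simp [hG, hA.1])) (hGsub s B (by simp [hG, hB.1]))
        hA.1.2 hB.1.2 hA.2 hB.2 hne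
    have hsub : (G s).filter (fun A => x ∈ A) ⊆ F := by
      intro A hA
      simp only [Finset.mem_filter, hG, hF'] at hA
      exact hA.1.1.1
    have := card_lt_of_pairwise hcf hsub hp
    omega
  have hfiber_large : ∀ s, n ≤ 2*s → ∀ x ∈ Finset.Icc 1 n,
      ((G s).filter (fun A => x ∉ A)).card ≤ k - 1 := by
    intro s hs x hx
    have hp : (((G s).filter (fun A => x ∉ A) : Finset (Finset ℕ)) : Set (Finset ℕ)).Pairwise (Crossing n) := by
      intro A hA B hB hne
      simp only [Finset.coe_filter, Set.mem_setOf_eq, hG, Finset.mem_filter] at hA hB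
      exact crossing_of_large hs (hGsub s A (by simp [hG, hA.1])) (hGsub s B (by simp [hG, hB.1]))
        hA.1.2 hB.1.2 hx hA.2 hB.2 hne
    have hsub : (G s).filter (fun A => x ∉ A) ⊆ F := by
      intro A hA
      simp only [Finset.mem_filter, hG, hF'] at hA
      exact hA.1.1.1
    have := card_lt_of_pairwise hcf hsub hp
    omega
  have hsmall : ∀ s ∈ Finset.Icc 1 (n-1), 2*s ≤ n → s * (G s).card ≤ n * (k-1) := by
    intro s hs h2s
    have h1 : ∑ A ∈ G s, A.card = ∑ x ∈ Finset.Icc 1 n, ((G s).filter (fun A => x ∈ A)).card :=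
      sum_card_eq _ (hGsub s)
    have h2 : ∑ A ∈ G s, A.card = s * (G s).card := by
      rw [Finset.sum_congr rfl (fun A hA => by
        simp only [hG, Finset.mem_filter] at hA; exact hA.2), Finset.sum_const, smul_eq_mul,
        mul_comm]
    calc s * (G s).card = ∑ x ∈ Finset.Icc 1 n, ((G s).filter (fun A => x ∈ A)).card := by
          rw [← h1, h2]
      _ ≤ ∑ x ∈ Finset.Icc 1 n, (k-1) :=
          Finset.sum_le_sum (fun x hx => hfiber_small s h2s x hx)
      _ = n * (k-1) := by simp [Nat.card_Icc, mul_comm]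
  have hlarge : ∀ s ∈ Finset.Icc 1 (n-1), n ≤ 2*s → (n-s) * (G s).card ≤ n * (k-1) := by
    intro s hs h2s
    have h1 : ∑ A ∈ G s, (n - A.card) = ∑ x ∈ Finset.Icc 1 n, ((G s).filter (fun A => x ∉ A)).card :=
      sum_ncard_eq _ (hGsub s)
    have h2 : ∑ A ∈ G s, (n - A.card) = (n-s) * (G s).card := by
      rw [Finset.sum_congr rfl (fun A hA => by
        simp only [hG, Finset.mem_filter] at hA; rw [hA.2]), Finset.sum_const, smul_eq_mul,
        mul_comm]
    calc (n-s) * (G s).card = ∑ x ∈ Finset.Icc 1 n, ((G s).filter (fun A => x ∉ A)).card := by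
          rw [← h1, h2]
      _ ≤ ∑ x ∈ Finset.Icc 1 n, (k-1) :=
          Finset.sum_le_sum (fun x hx => hfiber_large s h2s x hx)
      _ = n * (k-1) := by simp [Nat.card_Icc, mul_comm]
  -- real per-size bound
  set bb : ℕ → ℝ := fun s => if 2*s ≤ n then 1/(s:ℝ) else 1/(((n-s : ℕ)):ℝ) with hbb
  have hreal : ∀ s ∈ Finset.Icc 1 (n-1), ((G s).card : ℝ) ≤ (n*(k-1) : ℕ) * bb s := by
    intro s hs
    rw [Finset.mem_Icc] at hs
    by_cases h2s : 2*s ≤ n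
    · have hnat := hsmall s (Finset.mem_Icc.2 hs) h2s
      have hs0 : (0:ℝ) < (s:ℝ) := by exact_mod_cast hs.1
      rw [hbb]; simp only [h2s, if_pos]
      rw [mul_one_div, le_div_iff₀ hs0]
      calc ((G s).card : ℝ) * s = ((s * (G s).card : ℕ) : ℝ) := by push_cast; ring
        _ ≤ ((n*(k-1) : ℕ) : ℝ) := by exact_mod_cast hnat
    · have hnat := hlarge s (Finset.mem_Icc.2 hs) (le_of_not_ge h2s)
      have hns : 0 < n - s := by omega
      have hs0 : (0:ℝ) < ((n-s : ℕ):ℝ) := by exact_mod_cast hns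
      rw [hbb]; simp only [h2s, if_neg, if_false]
      rw [mul_one_div, le_div_iff₀ hs0]
      calc ((G s).card : ℝ) * ((n-s:ℕ):ℝ) = (((n-s) * (G s).card : ℕ) : ℝ) := by push_cast; ring
        _ ≤ ((n*(k-1) : ℕ) : ℝ) := by exact_mod_cast hnat
  have hsum : ∑ s ∈ Finset.Icc 1 (n-1), bb s ≤ 2*H := by
    rw [← Finset.sum_filter_add_sum_filter_not (Finset.Icc 1 (n-1)) (fun s => 2*s ≤ n)]
    have h1 : ∑ s ∈ (Finset.Icc 1 (n-1)).filter (fun s => 2*s ≤ n), bb s ≤ H := by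
      rw [hH]
      calc ∑ s ∈ (Finset.Icc 1 (n-1)).filter (fun s => 2*s ≤ n), bb s
          = ∑ s ∈ (Finset.Icc 1 (n-1)).filter (fun s => 2*s ≤ n), 1/(s:ℝ) :=
            Finset.sum_congr rfl (fun s hs => by
              simp only [Finset.mem_filter] at hs; simp [hbb, hs.2])
        _ ≤ ∑ s ∈ Finset.Icc 1 n, 1/(s:ℝ) :=
            Finset.sum_le_sum_of_subset_of_nonneg
              ((Finset.filter_subset _ _).trans (Finset.Icc_subset_Icc_right (by omega)))
              (fun i _ _ => by positivity)
    have h2 : ∑ s ∈ (Finset.Icc 1 (n-1)).filter (fun s => ¬ 2*s ≤ n), bb s ≤ H := by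
      rw [hH]
      have hinj : ∀ x ∈ (Finset.Icc 1 (n-1)).filter (fun s => ¬ 2*s ≤ n),
          ∀ y ∈ (Finset.Icc 1 (n-1)).filter (fun s => ¬ 2*s ≤ n), n - x = n - y → x = y := by
        intro x hx y hy h
        simp only [Finset.mem_filter, Finset.mem_Icc] at hx hy
        omega
      calc ∑ s ∈ (Finset.Icc 1 (n-1)).filter (fun s => ¬ 2*s ≤ n), bb s
          = ∑ s ∈ (Finset.Icc 1 (n-1)).filter (fun s => ¬ 2*s ≤ n), 1/(((n-s:ℕ)):ℝ) :=
            Finset.sum_congr rfl (fun s hs => by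
              simp only [Finset.mem_filter] at hs; simp [hbb, hs.2])
        _ = ∑ t ∈ ((Finset.Icc 1 (n-1)).filter (fun s => ¬ 2*s ≤ n)).image (fun s => n - s),
              1/(t:ℝ) := (Finset.sum_image (f := fun t : ℕ => 1/(t:ℝ)) hinj).symm
        _ ≤ ∑ s ∈ Finset.Icc 1 n, 1/(s:ℝ) := by
            refine Finset.sum_le_sum_of_subset_of_nonneg ?_ (fun i _ _ => by positivity)
            intro t ht
            simp only [Finset.mem_image, Finset.mem_filter, Finset.mem_Icc] at ht
            obtain ⟨s, ⟨⟨hs1, hs2⟩, hs3⟩, rfl⟩ := ht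
            rw [Finset.mem_Icc]
            omega
    linarith
  have hM : ((n*(k-1) : ℕ) : ℝ) = (n:ℝ) * ((k:ℝ)-1) := by
    have : ((k - 1 : ℕ) : ℝ) = (k:ℝ) - 1 := by
      rw [Nat.cast_sub hk]; simp
    push_cast [this]; ring
  have hF'le : (F'.card : ℝ) ≤ (n:ℝ)*((k:ℝ)-1) * (2*H) := by
    calc (F'.card : ℝ) = ∑ s ∈ Finset.Icc 1 (n-1), ((G s).card : ℝ) := by
          rw [hcard]; push_cast; rfl
      _ ≤ ∑ s ∈ Finset.Icc 1 (n-1), ((n*(k-1):ℕ):ℝ) * bb s := Finset.sum_le_sum hreal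
      _ = ((n*(k-1):ℕ):ℝ) * ∑ s ∈ Finset.Icc 1 (n-1), bb s := by rw [Finset.mul_sum]
      _ ≤ ((n*(k-1):ℕ):ℝ) * (2*H) := by
          refine mul_le_mul_of_nonneg_left hsum (by positivity)
      _ = (n:ℝ)*((k:ℝ)-1) * (2*H) := by rw [hM]
  have hrar : (n:ℝ)*((k:ℝ)-1) * (2*H) = 2*((k:ℝ)-1)*(n:ℝ)*H := by ring
  have hfc : (F.card : ℝ) ≤ (F'.card : ℝ) + 2 := by exact_mod_cast hsplit
  linarith
end

section
/- Let F be a weakly k-cross-free family of subsets of [n] (containing no singletons or the empty set). Then the number of members of F of size exactly s is at most (k-1)·n/s, for every s ≥ 1. -/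
theorem count_of_size_s (n k s : ℕ) (F : Finset (Finset ℕ))
    (hF : ∀ A ∈ F, A ⊆ Finset.Icc 1 n) (hbig : ∀ A ∈ F, 2 ≤ A.card)
    (hcf : WeaklyKCrossFree k F) (hs : 1 ≤ s) :
    ((F.filter (fun A => A.card = s)).card : ℝ) ≤ (k - 1) * n / s := by
  classical
  rcases Nat.eq_zero_or_pos k with hk | hk
  · exact absurd ⟨∅, Finset.empty_subset F, by simp [hk]⟩ hcf
  set Fs := F.filter (fun A => A.card = s) with hFs
  have key : ∀ x : ℕ, (Fs.filter (fun A => x ∈ A)).card ≤ k - 1 := by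
    intro x
    by_contra h
    push_neg at h
    have hk' : k ≤ (Fs.filter (fun A => x ∈ A)).card := by omega
    obtain ⟨S, hSsub, hScard⟩ := Finset.exists_subset_card_eq hk'
    apply hcf
    refine ⟨S, ?_, hScard, ?_⟩
    · intro A hA
      have := hSsub hA
      simp only [hFs, Finset.mem_filter] at this
      exact this.1.1
    · intro A hA B hB hAB
      have hA' := hSsub hA; have hB' := hSsub hB
      simp only [hFs, Finset.mem_filter] at hA' hB'
      refine ⟨⟨x, Finset.mem_inter.2 ⟨hA'.2, hB'.2⟩⟩, ?_, ?_⟩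
      · rw [Finset.sdiff_nonempty]
        intro hsub
        exact hAB (Finset.eq_of_subset_of_card_le hsub (by omega))
      · rw [Finset.sdiff_nonempty]
        intro hsub
        exact hAB.symm (Finset.eq_of_subset_of_card_le hsub (by omega))
  have count : s * Fs.card ≤ (k - 1) * n := by
    have e1 : s * Fs.card = ∑ A ∈ Fs, A.card := by
      rw [Finset.sum_congr rfl (fun A hA => (Finset.mem_filter.1 hA).2)]
      simp [mul_comm]
      exact Or.inl rfl
    have e2 : ∀ A ∈ Fs, A.card = ∑ x ∈ Finset.Icc 1 n, if x ∈ A then 1 else 0 := by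
      intro A hA
      have hsub : A ⊆ Finset.Icc 1 n := hF A (Finset.mem_filter.1 hA).1
      rw [← Finset.card_filter, Finset.filter_mem_eq_inter,
        Finset.inter_eq_right.2 hsub]
    calc s * Fs.card = ∑ A ∈ Fs, ∑ x ∈ Finset.Icc 1 n, if x ∈ A then 1 else 0 := by
          rw [e1]; exact Finset.sum_congr rfl e2
      _ = ∑ x ∈ Finset.Icc 1 n, ∑ A ∈ Fs, if x ∈ A then 1 else 0 := Finset.sum_comm
      _ = ∑ x ∈ Finset.Icc 1 n, (Fs.filter (fun A => x ∈ A)).card := by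
          refine Finset.sum_congr rfl fun x _ => ?_
          rw [Finset.card_filter]
      _ ≤ ∑ x ∈ Finset.Icc 1 n, (k - 1) := Finset.sum_le_sum fun x _ => key x
      _ = (k - 1) * n := by simp [Nat.card_Icc, mul_comm]
  have hs' : (0:ℝ) < s := by exact_mod_cast hs
  rw [le_div_iff₀ hs']
  have hc : ((s : ℝ)) * Fs.card ≤ ((k - 1 : ℕ) : ℝ) * n := by exact_mod_cast count
  rw [Nat.cast_sub hk] at hc
  push_cast at hc ⊢
  linarith
end
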